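/- Let P = X^4 + a1·X^3 + a2·X^2 + a3·X + a4 over a field k of characteristic zero and Q = b0·X^3 + b1·X^2 + b2·X + b3 the remainder of (P')^2 mod P. Let P̃(X,Y) = Y^4·P(X/Y) be the homogenization of P and H = P̃''_{XX}·P̃''_{YY} − (P̃''_{XY})^2 its Hessian. Then H(X,1) = (−9·a1^2 + 24·a2)·P − 9·Q. -/
import Mathlib


open Polynomial

/-- The monic quartic `X^4 + a1 X^3 + a2 X^2 + a3 X + a4`. -/
noncomputable def quartic {k : Type*} [Field k] (a1 a2 a3 a4 : k) : k[X] :=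
  X ^ 4 + C a1 * X ^ 3 + C a2 * X ^ 2 + C a3 * X + C a4

/-- Remainder of the square of the derivative of P under Euclidean division by P. -/
noncomputable def resCubic {k : Type*} [Field k] (a1 a2 a3 a4 : k) : k[X] :=
  (derivative (quartic a1 a2 a3 a4)) ^ 2 %ₘ quartic a1 a2 a3 a4

/-- Discriminant of the monic quartic `X^4 + p X^3 + q X^2 + r X + s`. -/
def quarticDisc {R : Type*} [CommRing R] (p q r s : R) : R :=
  256*s^3 - 192*p*r*s^2 - 128*q^2*s^2 + 144*p^2*q*s^2 - 27*p^4*s^2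
  + 144*q*r^2*s - 6*p^2*r^2*s - 80*p*q^2*r*s + 18*p^3*q*r*s + 16*q^4*s
  - 4*p^2*q^3*s - 27*r^4 + 18*p*q*r^3 - 4*p^3*r^3 - 4*q^3*r^2 + p^2*q^2*r^2

/-- Discriminant of the cubic `b0 X^3 + b1 X^2 + b2 X + b3`. -/
def cubicDisc {R : Type*} [CommRing R] (b0 b1 b2 b3 : R) : R :=
  b1^2*b2^2 - 4*b0*b2^3 - 4*b1^3*b3 + 18*b0*b1*b2*b3 - 27*b0^2*b3^2


lemma resCubic_eq {k : Type*} [Field k] (a1 a2 a3 a4 : k) :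
    resCubic a1 a2 a3 a4 =
      C (-a1^3 + 4*a1*a2 - 8*a3) * X^3 + C (-a1^2*a2 - 2*a1*a3 + 4*a2^2 - 16*a4) * X^2
      + C (-a1^2*a3 - 8*a1*a4 + 4*a2*a3) * X + C (a3^2 - a1^2*a4) := by
  have hm : (quartic a1 a2 a3 a4).Monic := by
    unfold quartic; monicity!
  set R : k[X] := C (-a1^3 + 4*a1*a2 - 8*a3) * X^3 + C (-a1^2*a2 - 2*a1*a3 + 4*a2^2 - 16*a4) * X^2
      + C (-a1^2*a3 - 8*a1*a4 + 4*a2*a3) * X + C (a3^2 - a1^2*a4) with hR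
  have key : R + quartic a1 a2 a3 a4 * (16 * X^2 + C (8*a1) * X + C (a1^2))
      = (derivative (quartic a1 a2 a3 a4)) ^ 2 := by
    simp only [quartic, derivative_add, derivative_mul, derivative_C, derivative_X,
      derivative_X_pow, hR, map_mul, map_add, map_sub, map_neg, map_ofNat, map_pow, map_natCast]
    push_cast
    ring
  have hdeg : R.degree < (quartic a1 a2 a3 a4).degree := by
    have h4 : (quartic a1 a2 a3 a4).degree = 4 := by
      unfold quartic; compute_degree!
    rw [h4, hR]
    refine lt_of_le_of_lt (by compute_degree : _ ≤ (3 : WithBot ℕ)) (by norm_num)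
  exact (Polynomial.div_modByMonic_unique _ _ hm ⟨key, hdeg⟩).2

open MvPolynomial in
lemma pderiv_two {k : Type*} [CommSemiring k] (i : Fin 2) :
    pderiv i (2 : MvPolynomial (Fin 2) k) = 0 := by
  rw [show (2 : MvPolynomial (Fin 2) k) = MvPolynomial.C (2:k) from (map_ofNat _ 2).symm, pderiv_C]

open MvPolynomial in
lemma pderiv_three {k : Type*} [CommSemiring k] (i : Fin 2) :
    pderiv i (3 : MvPolynomial (Fin 2) k) = 0 := by
  rw [show (3 : MvPolynomial (Fin 2) k) = MvPolynomial.C (3:k) from (map_ofNat _ 3).symm, pderiv_C]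

open MvPolynomial in
lemma pderiv_four {k : Type*} [CommSemiring k] (i : Fin 2) :
    pderiv i (4 : MvPolynomial (Fin 2) k) = 0 := by
  rw [show (4 : MvPolynomial (Fin 2) k) = MvPolynomial.C (4:k) from (map_ofNat _ 4).symm, pderiv_C]

open MvPolynomial in
set_option maxHeartbeats 1000000 in
/-- The Hessian of the homogenized quartic satisfies `H(X,1) = (-9 a1^2 + 24 a2) P - 9 Q`. -/
theorem stmt_4 {k : Type*} [Field k] [CharZero k] (a1 a2 a3 a4 : k)
    (Pt : MvPolynomial (Fin 2) k)
    (hPt : Pt = (X 0) ^ 4 + MvPolynomial.C a1 * (X 0) ^ 3 * (X 1)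
      + MvPolynomial.C a2 * (X 0) ^ 2 * (X 1) ^ 2
      + MvPolynomial.C a3 * (X 0) * (X 1) ^ 3 + MvPolynomial.C a4 * (X 1) ^ 4)
    (H : MvPolynomial (Fin 2) k)
    (hH : H = pderiv 0 (pderiv 0 Pt) * pderiv 1 (pderiv 1 Pt) - (pderiv 0 (pderiv 1 Pt)) ^ 2) :
    MvPolynomial.aeval ![(Polynomial.X : k[X]), 1] H
      = Polynomial.C (-9*a1^2 + 24*a2) * quartic a1 a2 a3 a4 - 9 * resCubic a1 a2 a3 a4 := by
  subst hPt hH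
  simp [Pi.single_eq_of_ne (by decide : (1:Fin 2) ≠ 0), Pi.single_eq_of_ne (by decide : (0:Fin 2) ≠ 1),
    pderiv_two, pderiv_three, pderiv_four]
  rw [resCubic_eq, quartic]
  simp only [map_add, map_sub, map_mul, map_neg, map_pow, map_ofNat]
  ring
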